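/- Suppose that at time t every node i satisfies (α + β)·(|N_i^+(t)| + |N_i^-(t)|) ≤ 1 (for instance when α + β ≤ 1/Deg(𝒢_t), where Deg(𝒢_t) is the maximum in-degree of the time-t interaction graph). Then for every realization of the attention values B_t, D_t ∈ {0,1}, one step of the state-flipping update satisfies M(t+1) ≤ M(t). -/

import Mathlib

/-- The maximum absolute state `M = max_{i ∈ V} |x i|`. -/
noncomputable def Mmax {n : ℕ} (hn : 3 ≤ n) (x : Fin n → ℝ) : ℝ :=
  Finset.univ.sup' ⟨⟨0, by omega⟩, Finset.mem_univ _⟩ fun i => |x i|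

/-!
Writing `a = α B`, `b = β D` and `c = a |N⁺ᵢ| + b |N⁻ᵢ|`, the update reads
`s'ᵢ = (1 - c) sᵢ + a ∑_{N⁺ᵢ} sⱼ - b ∑_{N⁻ᵢ} sⱼ`. The degree condition gives `0 ≤ c ≤ 1`, so the
absolute values of the coefficients sum to `(1 - c) + c = 1`, and `|s'ᵢ|` is at most the largest `|sⱼ|`.
-/

open Finset

section StateFlipping

variable {ι : Type*}

lemma abs_sum_le_card_mul {P : Finset ι} {s : ι → ℝ} {M : ℝ} (hM : ∀ j, |s j| ≤ M) :
    |∑ j ∈ P, s j| ≤ #P * M := by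
  simpa using norm_sum_le_of_le P fun j _ => (Real.norm_eq_abs (s j)).trans_le (hM j)

lemma state_flip_update_eq (a b : ℝ) (P N : Finset ι) (s : ι → ℝ) (i : ι) :
    s i - a * ∑ j ∈ P, (s i - s j) - b * ∑ j ∈ N, (s i + s j) =
      (1 - (a * #P + b * #N)) * s i + a * ∑ j ∈ P, s j - b * ∑ j ∈ N, s j := by
  simp only [sum_sub_distrib, sum_add_distrib, sum_const, nsmul_eq_mul]
  ring

lemma abs_state_flip_update_le {a b M : ℝ} (ha : 0 ≤ a) (hb : 0 ≤ b) {P N : Finset ι}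
    (hc : a * #P + b * #N ≤ 1) {s : ι → ℝ} (hM : ∀ j, |s j| ≤ M) (i : ι) :
    |s i - a * ∑ j ∈ P, (s i - s j) - b * ∑ j ∈ N, (s i + s j)| ≤ M := by
  rw [state_flip_update_eq]
  have hself : |(1 - (a * #P + b * #N)) * s i| ≤ (1 - (a * #P + b * #N)) * M := by
    rw [abs_mul, abs_of_nonneg (sub_nonneg.2 hc)]
    exact mul_le_mul_of_nonneg_left (hM i) (sub_nonneg.2 hc)
  have hP : |a * ∑ j ∈ P, s j| ≤ a * (#P * M) := by
    rw [abs_mul, abs_of_nonneg ha]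
    exact mul_le_mul_of_nonneg_left (abs_sum_le_card_mul hM) ha
  have hN : |b * ∑ j ∈ N, s j| ≤ b * (#N * M) := by
    rw [abs_mul, abs_of_nonneg hb]
    exact mul_le_mul_of_nonneg_left (abs_sum_le_card_mul hM) hb
  calc _ ≤ |(1 - (a * #P + b * #N)) * s i| + |a * ∑ j ∈ P, s j| + |b * ∑ j ∈ N, s j| :=
        (abs_sub _ _).trans (add_le_add_left (abs_add_le _ _) _)
    _ ≤ (1 - (a * #P + b * #N)) * M + a * (#P * M) + b * (#N * M) := by gcongr
    _ = M := by ring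

end StateFlipping

lemma abs_le_Mmax {n : ℕ} (hn : 3 ≤ n) (x : Fin n → ℝ) (i : Fin n) : |x i| ≤ Mmax hn x :=
  le_sup' (fun i => |x i|) (mem_univ i)

lemma Mmax_le_iff {n : ℕ} (hn : 3 ≤ n) {x : Fin n → ℝ} {c : ℝ} :
    Mmax hn x ≤ c ↔ ∀ i, |x i| ≤ c :=
  (sup'_le_iff _ _).trans <| by simp only [mem_univ, true_imp_iff]

lemma nonneg_and_le_one_of_eq_zero_or_eq_one {B : ℝ} (hB : B = 0 ∨ B = 1) : 0 ≤ B ∧ B ≤ 1 := by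
  rcases hB with rfl | rfl <;> norm_num

theorem state_flipping_one_step_nonexpansive_degree_general
    {n : ℕ} (hn : 3 ≤ n)
    (α β : ℝ) (hα : 0 < α) (hβ : 0 < β)
    (Np Nd : Fin n → Finset (Fin n))
    (hdeg : ∀ i, (α + β) * (((Np i).card : ℝ) + ((Nd i).card : ℝ)) ≤ 1)
    (B D : ℝ) (hB : B = 0 ∨ B = 1) (hD : D = 0 ∨ D = 1)
    (s s' : Fin n → ℝ)
    (hupd : ∀ i, s' i = s i - α * B * (∑ j ∈ Np i, (s i - s j))
        - β * D * (∑ j ∈ Nd i, (s i + s j))) :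
    Mmax hn s' ≤ Mmax hn s := by
  obtain ⟨hB0, hB1⟩ := nonneg_and_le_one_of_eq_zero_or_eq_one hB
  obtain ⟨hD0, hD1⟩ := nonneg_and_le_one_of_eq_zero_or_eq_one hD
  refine (Mmax_le_iff hn).2 fun i => ?_
  have hweight : α * B * #(Np i) + β * D * #(Nd i) ≤ 1 := by
    have hp : (0 : ℝ) ≤ #(Np i) := Nat.cast_nonneg _
    have hd : (0 : ℝ) ≤ #(Nd i) := Nat.cast_nonneg _
    nlinarith [hdeg i, mul_le_mul_of_nonneg_left hB1 (mul_nonneg hα.le hp),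
      mul_le_mul_of_nonneg_left hD1 (mul_nonneg hβ.le hd)]
  rw [hupd i]
  exact abs_state_flip_update_le (by positivity) (by positivity) hweight (abs_le_Mmax hn s) i

/-- if at time `t` every node `i` satisfies
`(α + β)·(|N_i^+(t)| + |N_i^-(t)|) ≤ 1`, then one step of the state-flipping update
satisfies `M(t+1) ≤ M(t)`. -/
theorem state_flipping_one_step_nonexpansive_degree
    {n : ℕ} (hn : 3 ≤ n)
    (α β : ℝ) (hα : 0 < α) (hβ : 0 < β)
    (Np Nd : Fin n → Finset (Fin n))
    (hNp : ∀ i, i ∉ Np i) (hNd : ∀ i, i ∉ Nd i)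
    (hdisj : ∀ i, Disjoint (Np i) (Nd i))
    (hdeg : ∀ i, (α + β) * (((Np i).card : ℝ) + ((Nd i).card : ℝ)) ≤ 1)
    (B D : ℝ) (hB : B = 0 ∨ B = 1) (hD : D = 0 ∨ D = 1)
    (s s' : Fin n → ℝ)
    (hupd : ∀ i, s' i = s i - α * B * (∑ j ∈ Np i, (s i - s j))
        - β * D * (∑ j ∈ Nd i, (s i + s j))) :
    Mmax hn s' ≤ Mmax hn s :=
  state_flipping_one_step_nonexpansive_degree_general hn α β hα hβ Np Nd hdeg B D hB hD s s' hupd
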